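/- Let 0 ≤ a ≤ 1 and r > 0. Then 2∫_{a}^{1} e^{irs}(1-s²)^{-1/2} ds = 2 e^{ir} f_1^+(r) - 2 e^{iar} f_a^+(r), where f_a^+(r) = -i ∫_0^∞ e^{-rs} (s² + 1 - a² - 2ais)^{-1/2} ds with the principal branch of the square root. -/

import Mathlib

open MeasureTheory Real Set Filter

/-- `f_a^±(r) = ∓i ∫_0^∞ e^{-rs}(s² + 1 - a² ∓ 2ais)^{-1/2} ds`, with the principal
branch of the inverse square root; `sgn = 1` gives `f_a^+` and `sgn = -1` gives `f_a^-`. -/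
noncomputable def fpm (sgn a r : ℝ) : ℂ :=
  (-(sgn : ℂ)) * Complex.I *
    ∫ s in Set.Ioi (0 : ℝ),
      Complex.exp (-(r * s : ℝ)) *
        (((s ^ 2 + 1 - a ^ 2 : ℝ) : ℂ) - (sgn : ℂ) * ((2 * a * s : ℝ) : ℂ) * Complex.I) ^
          (-(1 / 2) : ℂ)

namespace Stmt2Aux

noncomputable def pc (a s : ℝ) : ℂ := ((s:ℂ) - a*Complex.I)^2 + 1

noncomputable def Gc (r a s : ℝ) : ℂ := Complex.exp (-(r*s:ℝ)) * pc a s ^ (-(1/2):ℂ)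

noncomputable def Fc (r a : ℝ) : ℂ := ∫ s in Set.Ioi (0:ℝ), Gc r a s

lemma pc_eq (a s : ℝ) : pc a s = ((s^2 + 1 - a^2 : ℝ):ℂ) + ((-(2*a*s) : ℝ):ℂ) * Complex.I := by
  simp only [pc]
  push_cast
  ring_nf
  rw [Complex.I_sq]
  ring

lemma pc_re (a s : ℝ) : (pc a s).re = s^2 + 1 - a^2 := by
  rw [pc_eq]; simp [← Complex.ofReal_pow]

lemma pc_im (a s : ℝ) : (pc a s).im = -(2*a*s) := by
  rw [pc_eq]; simp [← Complex.ofReal_pow]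

lemma fpm_eq (a r : ℝ) : fpm 1 a r = -Complex.I * Fc r a := by
  have h : ∀ s : ℝ, ((s ^ 2 + 1 - a ^ 2 : ℝ) : ℂ) - (1:ℝ) * ((2 * a * s : ℝ) : ℂ) * Complex.I
      = pc a s := by
    intro s
    rw [pc_eq]
    push_cast
    ring
  simp only [fpm, Fc, Gc, Complex.ofReal_one, one_mul]
  rw [show (-(1:ℂ)) * Complex.I = -Complex.I by ring]
  congr 1
  refine setIntegral_congr_fun measurableSet_Ioi (fun s _ => ?_)
  rw [← h s]
  norm_num

end Stmt2Aux

namespace Stmt2Aux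

lemma Ibound {r : ℝ} (hr : 0 < r) {c : ℝ} (hc : -1 < c) :
    IntegrableOn (fun s : ℝ => Real.exp (-(r*s)) * s ^ c) (Set.Ioi (0:ℝ)) := by
  have h0 : IntegrableOn (fun x : ℝ => Real.exp (-x) * x ^ c) (Set.Ioi (0:ℝ)) := by
    simpa using Real.GammaIntegral_convergent (by linarith : (0:ℝ) < c + 1)
  have h1 : IntegrableOn (fun s : ℝ => Real.exp (-(r*s)) * (r*s) ^ c) (Set.Ioi (0:ℝ)) := by
    have := (integrableOn_Ioi_comp_mul_left_iff
      (fun x : ℝ => Real.exp (-x) * x ^ c) 0 hr).mpr (by simpa using h0)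
    simpa using this
  have h2 := h1.const_mul (r ^ (-c))
  refine IntegrableOn.congr_fun h2 (fun s hs => ?_) measurableSet_Ioi
  have hs0 : (0:ℝ) < s := hs
  rw [Real.mul_rpow hr.le hs0.le]
  rw [← mul_assoc, ← mul_assoc]
  rw [mul_comm (r ^ (-c)) (Real.exp (-(r*s)))]
  rw [mul_assoc (Real.exp (-(r*s))), ← Real.rpow_add hr]
  norm_num

lemma abs_pc_ge_s {a s : ℝ} (hs : 0 ≤ s) :
    s ≤ ‖pc a s‖ := by
  have h2 : s^2 ≤ Complex.normSq (pc a s) := by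
    rw [Complex.normSq_apply, pc_re, pc_im]
    nlinarith [sq_nonneg (s^2 + 1 - a^2 - s), sq_nonneg (a*s), sq_nonneg s, sq_nonneg (1-a^2)]
  calc s = Real.sqrt (s^2) := (Real.sqrt_sq hs).symm
    _ ≤ Real.sqrt (Complex.normSq (pc a s)) := Real.sqrt_le_sqrt h2
    _ = ‖pc a s‖ := by rw [Complex.norm_def]

lemma abs_pc_ge_re {a s : ℝ} : s^2 + 1 - a^2 ≤ ‖pc a s‖ := by
  have := Complex.re_le_norm (pc a s)
  rwa [pc_re] at this

lemma norm_cpow_neg_half_le {z : ℂ} {t : ℝ} (ht : 0 < t) (h : t ≤ ‖z‖) :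
    ‖z ^ (-(1/2):ℂ)‖ ≤ t ^ (-(1/2):ℝ) := by
  rw [show (-(1/2):ℂ) = ((-(1/2):ℝ):ℂ) by norm_num,
    Complex.norm_cpow_real]
  exact Real.rpow_le_rpow_of_nonpos ht h (by norm_num)

lemma norm_Gc_le {r a s : ℝ} (hs : 0 < s) :
    ‖Gc r a s‖ ≤ Real.exp (-(r*s)) * s ^ (-(1/2):ℝ) := by
  rw [Gc, norm_mul, Complex.norm_exp]
  simp only [Complex.ofReal_neg, Complex.neg_re, Complex.ofReal_re]
  exact mul_le_mul_of_nonneg_left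
    (norm_cpow_neg_half_le hs (abs_pc_ge_s hs.le)) (Real.exp_pos _).le

end Stmt2Aux

namespace Stmt2Aux

lemma pc_slit {a s : ℝ} (hs : 0 < s) : pc a s ∈ Complex.slitPlane := by
  rw [Complex.mem_slitPlane_iff, pc_re, pc_im]
  rcases eq_or_ne a 0 with h | h
  · left; subst h; nlinarith
  · right
    simp only [neg_ne_zero]
    positivity

lemma pc_slit' {a s : ℝ} (h : 0 < s^2 + 1 - a^2) : pc a s ∈ Complex.slitPlane := by
  rw [Complex.mem_slitPlane_iff, pc_re]; left; exact h

lemma continuous_pc_s (a : ℝ) : Continuous (fun s : ℝ => pc a s) := by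
  unfold pc; fun_prop

lemma continuous_pc_a (s : ℝ) : Continuous (fun a : ℝ => pc a s) := by
  unfold pc; fun_prop

lemma Gc_contAt_s {r a s : ℝ} (hs : 0 < s) : ContinuousAt (fun s => Gc r a s) s := by
  have h2 : Continuous (fun s : ℝ => Complex.exp (-(r*s:ℝ))) := by fun_prop
  exact ContinuousAt.mul h2.continuousAt
    (((continuous_pc_s a).continuousAt).cpow continuousAt_const (pc_slit hs))

lemma Gc_aesm (r a : ℝ) : AEStronglyMeasurable (fun s => Gc r a s)
    (volume.restrict (Set.Ioi (0:ℝ))) := by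
  refine ContinuousOn.aestronglyMeasurable (fun s hs => ?_) measurableSet_Ioi
  exact (Gc_contAt_s hs).continuousWithinAt

lemma Gc_integrableOn {r : ℝ} (hr : 0 < r) (a : ℝ) :
    IntegrableOn (fun s => Gc r a s) (Set.Ioi (0:ℝ)) := by
  refine Integrable.mono' (Ibound hr (by norm_num : (-1:ℝ) < -(1/2))) (Gc_aesm r a) ?_
  filter_upwards [ae_restrict_mem measurableSet_Ioi] with s hs
  exact norm_Gc_le hs

noncomputable def Tc (r a s : ℝ) : ℂ :=
  ((s:ℂ) - a*Complex.I) * (Complex.exp (-(r*s:ℝ)) * pc a s ^ (-(3/2):ℂ))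

end Stmt2Aux

namespace Stmt2Aux

lemma abs_sub_aI_le {a s : ℝ} (ha : |a| ≤ 1) (hs : 0 ≤ s) :
    ‖(s:ℂ) - a*Complex.I‖ ≤ 1 + s := by
  have h1 : Complex.normSq ((s:ℂ) - a*Complex.I) = s^2 + a^2 := by
    simp [Complex.normSq_apply]; ring
  have h2 : Complex.normSq ((s:ℂ) - a*Complex.I) ≤ (1+s)^2 := by
    rw [h1]; nlinarith [sq_abs a, abs_nonneg a]
  calc ‖(s:ℂ) - a*Complex.I‖ = Real.sqrt (Complex.normSq ((s:ℂ) - a*Complex.I)) := by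
        rw [Complex.norm_def]
    _ ≤ Real.sqrt ((1+s)^2) := Real.sqrt_le_sqrt h2
    _ = 1 + s := by rw [Real.sqrt_sq (by linarith)]

lemma norm_Tc_le {r a b s : ℝ} (hab : |a| ≤ b) (hb : b < 1) (hs : 0 < s) :
    ‖Tc r a s‖ ≤ (1-b^2)⁻¹ * ((1+s) * (Real.exp (-(r*s)) * s ^ (-(1/2):ℝ))) := by
  have hb0 : 0 ≤ b := le_trans (abs_nonneg a) hab
  have hA : (0:ℝ) < 1 - b^2 := by nlinarith
  have ha2b2 : a^2 ≤ b^2 := by nlinarith [sq_abs a, abs_nonneg a]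
  have hA2 : 1 - b^2 ≤ ‖pc a s‖ := by
    refine le_trans ?_ abs_pc_ge_re
    nlinarith
  have hApos : (0:ℝ) < ‖pc a s‖ := lt_of_lt_of_le hA hA2
  have hpow : ‖pc a s‖ ^ (-(3/2):ℝ) ≤ s ^ (-(1/2):ℝ) * (1-b^2)⁻¹ := by
    rw [show (-(3/2):ℝ) = (-(1/2)) + (-1) by norm_num, Real.rpow_add hApos,
      Real.rpow_neg_one]
    refine mul_le_mul ?_ ?_ (by positivity) (by positivity)
    · exact Real.rpow_le_rpow_of_nonpos hs (abs_pc_ge_s hs.le) (by norm_num)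
    · exact inv_anti₀ hA hA2
  have hnp : ‖pc a s ^ (-(3/2):ℂ)‖ = ‖pc a s‖ ^ (-(3/2):ℝ) := by
    rw [show (-(3/2):ℂ) = ((-(3/2):ℝ):ℂ) by norm_num,
      Complex.norm_cpow_real]
  have hne : ‖Complex.exp (-((r*s:ℝ):ℂ))‖ = Real.exp (-(r*s)) := by
    rw [Complex.norm_exp]
    simp
  calc ‖Tc r a s‖
      = ‖(s:ℂ) - a*Complex.I‖ *
        (Real.exp (-(r*s)) * ‖pc a s‖ ^ (-(3/2):ℝ)) := by
        rw [Tc, norm_mul, norm_mul, hnp, hne]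
    _ ≤ (1+s) * (Real.exp (-(r*s)) * (s ^ (-(1/2):ℝ) * (1-b^2)⁻¹)) := by
        refine mul_le_mul (abs_sub_aI_le (le_trans hab hb.le) hs.le) ?_ (by positivity)
          (by linarith)
        exact mul_le_mul_of_nonneg_left hpow (Real.exp_pos _).le
    _ = (1-b^2)⁻¹ * ((1+s) * (Real.exp (-(r*s)) * s ^ (-(1/2):ℝ))) := by ring

lemma Bnd_integrable {r : ℝ} (hr : 0 < r) (b : ℝ) :
    IntegrableOn (fun s : ℝ => (1-b^2)⁻¹ * ((1+s) * (Real.exp (-(r*s)) * s ^ (-(1/2):ℝ))))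
      (Set.Ioi (0:ℝ)) := by
  have h := ((Ibound hr (by norm_num : (-1:ℝ) < -(1/2))).add
    (Ibound hr (by norm_num : (-1:ℝ) < 1/2))).const_mul ((1-b^2)⁻¹)
  refine IntegrableOn.congr_fun h (fun s hs => ?_) measurableSet_Ioi
  have hs0 : (0:ℝ) < s := hs
  have h1 : s ^ (1:ℝ) * s ^ (-(1/2):ℝ) = s ^ ((1/2):ℝ) := by
    rw [← Real.rpow_add hs0]; norm_num
  rw [Real.rpow_one] at h1
  simp only [Pi.add_apply]
  rw [← h1]
  ring

lemma Tc_contAt_s {r a s : ℝ} (hs : 0 < s) : ContinuousAt (fun s => Tc r a s) s := by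
  have h2 : Continuous (fun s : ℝ => Complex.exp (-(r*s:ℝ))) := by fun_prop
  have h3 : Continuous (fun s : ℝ => (s:ℂ) - a*Complex.I) := by fun_prop
  unfold Tc
  exact ContinuousAt.mul h3.continuousAt (ContinuousAt.mul h2.continuousAt
    (((continuous_pc_s a).continuousAt).cpow continuousAt_const (pc_slit hs)))

lemma Tc_aesm (r a : ℝ) : AEStronglyMeasurable (fun s => Tc r a s)
    (volume.restrict (Set.Ioi (0:ℝ))) := by
  refine ContinuousOn.aestronglyMeasurable (fun s hs => ?_) measurableSet_Ioi
  exact (Tc_contAt_s hs).continuousWithinAt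

lemma Tc_integrableOn {r a : ℝ} (hr : 0 < r) (ha0 : 0 ≤ a) (ha1 : a < 1) :
    IntegrableOn (fun s => Tc r a s) (Set.Ioi (0:ℝ)) := by
  refine Integrable.mono' (Bnd_integrable hr a) (Tc_aesm r a) ?_
  filter_upwards [ae_restrict_mem measurableSet_Ioi] with s hs
  exact norm_Tc_le (le_of_eq (abs_of_nonneg ha0)) ha1 hs

end Stmt2Aux

namespace Stmt2Aux

lemma exponent_eq : (-(1/2):ℂ) - 1 = -(3/2) := by norm_num

lemma hasDerivAt_Gc_s {r a : ℝ} (s : ℝ) (hslit : pc a s ∈ Complex.slitPlane) :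
    HasDerivAt (fun s => Gc r a s) (-(r:ℂ) * Gc r a s - Tc r a s) s := by
  have hq : HasDerivAt (fun z : ℂ => (z - (a:ℂ)*Complex.I)^2 + 1)
      (2*((s:ℂ) - (a:ℂ)*Complex.I)) (s:ℂ) := by
    have := (((hasDerivAt_id ((s:ℂ))).sub_const ((a:ℂ)*Complex.I)).pow 2).add_const 1
    exact this.congr_deriv (by simp)
  have hpow := hq.cpow_const (c := (-(1/2):ℂ)) hslit
  have hlin : HasDerivAt (fun z : ℂ => -((r:ℂ)*z)) (-(r:ℂ)) (s:ℂ) := by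
    have := ((hasDerivAt_id ((s:ℂ))).const_mul (r:ℂ)).neg
    exact this.congr_deriv (by simp)
  have hexp := hlin.cexp
  have hprod := hexp.mul hpow
  have hre := hprod.comp_ofReal (z := s)
  have hfun : (fun x : ℝ => Complex.exp (-((r:ℂ)*(x:ℂ))) *
      (((x:ℂ) - (a:ℂ)*Complex.I)^2 + 1) ^ (-(1/2):ℂ)) = fun x => Gc r a x := by
    funext x
    unfold Gc pc
    congr 2
    push_cast
    ring
  simp only [Pi.mul_def] at hre
  rw [hfun] at hre
  convert hre using 1
  unfold Gc Tc pc
  rw [exponent_eq]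
  push_cast
  ring

lemma hasDerivAt_Gc_a {r s : ℝ} (a : ℝ) (hslit : pc a s ∈ Complex.slitPlane) :
    HasDerivAt (fun a => Gc r a s) (Complex.I * Tc r a s) a := by
  have hq : HasDerivAt (fun w : ℂ => ((s:ℂ) - w*Complex.I)^2 + 1)
      (2*((s:ℂ) - (a:ℂ)*Complex.I) * (-Complex.I)) (a:ℂ) := by
    have := ((((hasDerivAt_id ((a:ℂ))).mul_const Complex.I).const_sub
      ((s:ℂ))).pow 2).add_const 1
    exact this.congr_deriv (by simp)
  have hpow := hq.cpow_const (c := (-(1/2):ℂ)) hslit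
  have hmul := hpow.const_mul (Complex.exp (-((r*s:ℝ):ℂ)))
  have hre := hmul.comp_ofReal (z := a)
  have hfun : (fun x : ℝ => Complex.exp (-((r*s:ℝ):ℂ)) *
      (((s:ℂ) - (x:ℂ)*Complex.I)^2 + 1) ^ (-(1/2):ℂ)) = fun x => Gc r x s := by
    funext x
    unfold Gc pc
    rfl
  rw [hfun] at hre
  convert hre using 1
  unfold Tc pc
  rw [exponent_eq]
  ring

end Stmt2Aux

namespace Stmt2Aux

lemma Gc_contAt {r a s : ℝ} (hslit : pc a s ∈ Complex.slitPlane) :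
    ContinuousAt (fun s => Gc r a s) s := by
  have h2 : Continuous (fun s : ℝ => Complex.exp (-(r*s:ℝ))) := by fun_prop
  exact ContinuousAt.mul h2.continuousAt
    (((continuous_pc_s a).continuousAt).cpow continuousAt_const hslit)

lemma Gc_tendsto_zero {r a : ℝ} (hr : 0 < r) :
    Filter.Tendsto (fun s => Gc r a s) Filter.atTop (nhds 0) := by
  have hexp : Filter.Tendsto (fun s : ℝ => Real.exp (-(r*s))) Filter.atTop (nhds 0) := by
    have h1 : Filter.Tendsto (fun s : ℝ => r*s) Filter.atTop Filter.atTop :=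
      Filter.Tendsto.const_mul_atTop hr Filter.tendsto_id
    exact Real.tendsto_exp_atBot.comp (Filter.tendsto_neg_atTop_atBot.comp h1)
  refine squeeze_zero_norm' ?_ hexp
  filter_upwards [Filter.eventually_ge_atTop (1:ℝ)] with s hs
  calc ‖Gc r a s‖ ≤ Real.exp (-(r*s)) * s ^ (-(1/2):ℝ) := norm_Gc_le (by linarith)
    _ ≤ Real.exp (-(r*s)) * 1 := by
        refine mul_le_mul_of_nonneg_left ?_ (Real.exp_pos _).le
        exact Real.rpow_le_one_of_one_le_of_nonpos hs (by norm_num)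
    _ = Real.exp (-(r*s)) := mul_one _

lemma Gc_zero (r a : ℝ) : Gc r a 0 = ((1 - a^2 : ℝ):ℂ) ^ (-(1/2):ℂ) := by
  unfold Gc
  rw [pc_eq]
  norm_num

lemma integral_deriv_s {r a : ℝ} (hr : 0 < r) (ha0 : 0 ≤ a) (ha1 : a < 1) :
    ∫ s in Set.Ioi (0:ℝ), (-(r:ℂ) * Gc r a s - Tc r a s) = 0 - Gc r a 0 := by
  refine integral_Ioi_of_hasDerivAt_of_tendsto ?_ ?_ ?_ (Gc_tendsto_zero hr)
  · refine (Gc_contAt ?_).continuousWithinAt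
    refine pc_slit' ?_
    nlinarith
  · intro x hx
    exact hasDerivAt_Gc_s x (pc_slit hx)
  · exact ((Gc_integrableOn hr a).const_mul (-(r:ℂ))).sub (Tc_integrableOn hr ha0 ha1)

lemma Tc_integral {r a : ℝ} (hr : 0 < r) (ha0 : 0 ≤ a) (ha1 : a < 1) :
    ∫ s in Set.Ioi (0:ℝ), Tc r a s = Gc r a 0 - (r:ℂ) * Fc r a := by
  have h := integral_deriv_s hr ha0 ha1
  rw [integral_sub ((Gc_integrableOn hr a).const_mul (-(r:ℂ)))
    (Tc_integrableOn hr ha0 ha1), integral_const_mul] at h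
  unfold Fc
  linear_combination -h

lemma Fc_hasDerivAt {r a : ℝ} (hr : 0 < r) (ha0 : 0 ≤ a) (ha1 : a < 1) :
    HasDerivAt (Fc r) (Complex.I * (Gc r a 0 - (r:ℂ) * Fc r a)) a := by
  have hb : (1+a)/2 < 1 := by linarith
  have hε : (0:ℝ) < (1-a)/2 := by linarith
  have key := hasDerivAt_integral_of_dominated_loc_of_deriv_le (μ := volume.restrict (Set.Ioi (0:ℝ)))
    (F := fun x s => Gc r x s) (F' := fun x s => Complex.I * Tc r x s) (x₀ := a)
    (bound := fun s => (1-((1+a)/2)^2)⁻¹ * ((1+s) * (Real.exp (-(r*s)) * s ^ (-(1/2):ℝ))))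
    (Metric.ball_mem_nhds a hε) (Filter.Eventually.of_forall (fun x => Gc_aesm r x)) (Gc_integrableOn hr a)
    ((Tc_aesm r a).const_mul Complex.I) ?_ (Bnd_integrable hr ((1+a)/2)) ?_
  · have h2 := key.2
    have : (∫ s in Set.Ioi (0:ℝ), Complex.I * Tc r a s) =
        Complex.I * (Gc r a 0 - (r:ℂ) * Fc r a) := by
      rw [integral_const_mul, Tc_integral hr ha0 ha1]
    rwa [this] at h2
  · filter_upwards [ae_restrict_mem measurableSet_Ioi] with s hs
    intro x hx
    rw [norm_mul, Complex.norm_I, one_mul]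
    refine norm_Tc_le ?_ hb hs
    have := abs_sub_abs_le_abs_sub x a
    have hd : |x - a| < (1-a)/2 := by
      rw [← Real.dist_eq]; exact hx
    have : |x| ≤ |a| + |x - a| := by
      calc |x| = |a + (x - a)| := by ring_nf
        _ ≤ |a| + |x - a| := abs_add_le _ _
    rw [abs_of_nonneg ha0] at this
    linarith
  · filter_upwards [ae_restrict_mem measurableSet_Ioi] with s hs
    intro x hx
    exact hasDerivAt_Gc_a x (pc_slit hs)

lemma Fc_contAt {r : ℝ} (hr : 0 < r) (a₀ : ℝ) : ContinuousAt (Fc r) a₀ := by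
  refine continuousAt_of_dominated (Filter.Eventually.of_forall (fun x => Gc_aesm r x)) ?_
    (Ibound hr (by norm_num : (-1:ℝ) < -(1/2))) ?_
  · refine Filter.Eventually.of_forall (fun x => ?_)
    filter_upwards [ae_restrict_mem measurableSet_Ioi] with s hs
    exact norm_Gc_le hs
  · filter_upwards [ae_restrict_mem measurableSet_Ioi] with s hs
    exact ContinuousAt.mul continuousAt_const
      (((continuous_pc_a s).continuousAt).cpow continuousAt_const (pc_slit hs))

end Stmt2Aux

namespace Stmt2Aux

noncomputable def gI (r s : ℝ) : ℂ :=
  Complex.exp (Complex.I * ((r * s : ℝ) : ℂ)) * ((Real.sqrt (1 - s ^ 2) : ℝ) : ℂ)⁻¹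

lemma gI_measurable (r : ℝ) : Measurable (gI r) := by
  unfold gI
  refine Measurable.mul ?_ ?_
  · fun_prop
  · exact (Complex.measurable_ofReal.comp
      ((Real.continuous_sqrt.comp (by fun_prop)).measurable)).inv

lemma norm_gI (r s : ℝ) : ‖gI r s‖ = (Real.sqrt (1 - s^2))⁻¹ := by
  unfold gI
  rw [norm_mul, Complex.norm_exp]
  have h1 : (Complex.I * ((r * s : ℝ) : ℂ)).re = 0 := by simp
  rw [h1, Real.exp_zero, one_mul, norm_inv, Complex.norm_real, Real.norm_eq_abs,
    abs_of_nonneg (Real.sqrt_nonneg _)]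

lemma rpow_neg_half_eq_inv_sqrt {x : ℝ} (hx : 0 ≤ x) :
    x ^ (-(1/2) : ℝ) = (Real.sqrt x)⁻¹ := by
  rw [Real.rpow_neg hx, Real.sqrt_eq_rpow]

lemma gI_intervalIntegrable {r x : ℝ} (hx0 : 0 ≤ x) (hx1 : x ≤ 1) :
    IntervalIntegrable (gI r) volume x 1 := by
  have h0 : IntervalIntegrable (fun u : ℝ => u ^ (-(1/2):ℝ)) volume 0 (1-x) :=
    intervalIntegral.intervalIntegrable_rpow' (by norm_num)
  have h1 := (h0.comp_sub_left 1)
  simp only [sub_zero, sub_sub_cancel] at h1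
  refine h1.symm.mono_fun ((gI_measurable r).stronglyMeasurable.aestronglyMeasurable) ?_
  filter_upwards [ae_restrict_mem measurableSet_uIoc] with s hs
  rw [Set.uIoc_of_le hx1] at hs
  obtain ⟨hsx, hs1⟩ := hs
  have hs0 : 0 < s := lt_of_le_of_lt hx0 hsx
  have h1s : 0 ≤ 1 - s := by linarith
  rw [norm_gI, Real.norm_eq_abs, abs_of_nonneg (Real.rpow_nonneg h1s _),
    rpow_neg_half_eq_inv_sqrt h1s]
  have hmono : Real.sqrt (1-s) ≤ Real.sqrt (1-s^2) := by
    refine Real.sqrt_le_sqrt ?_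
    nlinarith
  rcases eq_or_lt_of_le hs1 with h | h
  · subst h
    norm_num
  · have hpos : 0 < Real.sqrt (1-s) := Real.sqrt_pos.mpr (by linarith)
    exact inv_anti₀ hpos hmono

lemma gI_contAt {r x : ℝ} (hx0 : 0 ≤ x) (hx1 : x < 1) : ContinuousAt (gI r) x := by
  unfold gI
  refine ContinuousAt.mul (by fun_prop) ?_
  refine ContinuousAt.inv₀ (Complex.continuous_ofReal.continuousAt.comp ?_) ?_
  · exact (Real.continuous_sqrt.comp (by fun_prop)).continuousAt
  · simp only [ne_eq, Complex.ofReal_eq_zero]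
    refine ne_of_gt (Real.sqrt_pos.mpr ?_)
    nlinarith

lemma L_hasDerivAt {r x : ℝ} (hx0 : 0 ≤ x) (hx1 : x < 1) :
    HasDerivAt (fun u => ∫ s in u..(1:ℝ), gI r s) (-(gI r x)) x :=
  intervalIntegral.integral_hasDerivAt_left (gI_intervalIntegrable hx0 hx1.le)
    ((gI_measurable r).stronglyMeasurable.stronglyMeasurableAtFilter)
    (gI_contAt hx0 hx1)

lemma L_contOn (r : ℝ) : ContinuousOn (fun u => ∫ s in u..(1:ℝ), gI r s) (Set.Icc 0 1) := by
  have h : IntegrableOn (gI r) (Set.uIcc 0 1) volume := by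
    rw [Set.uIcc_of_le (by norm_num : (0:ℝ) ≤ 1),
      ← intervalIntegrable_iff_integrableOn_Icc_of_le (by norm_num : (0:ℝ) ≤ 1)]
    exact gI_intervalIntegrable le_rfl zero_le_one
  have := intervalIntegral.continuousOn_primitive_interval_left h
  rwa [Set.uIcc_of_le (by norm_num : (0:ℝ) ≤ 1)] at this

end Stmt2Aux

namespace Stmt2Aux

lemma Gc_zero' {r a : ℝ} (ha0 : 0 ≤ a) (ha1 : a < 1) :
    Gc r a 0 = ((Real.sqrt (1-a^2) : ℝ):ℂ)⁻¹ := by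
  have h : (0:ℝ) ≤ 1 - a^2 := by nlinarith
  rw [Gc_zero, show (-(1/2):ℂ) = ((-(1/2):ℝ):ℂ) by norm_num,
    ← Complex.ofReal_cpow h, rpow_neg_half_eq_inv_sqrt h, Complex.ofReal_inv]

lemma expi_hasDerivAt (r x : ℝ) :
    HasDerivAt (fun x : ℝ => Complex.exp (Complex.I * ((x*r:ℝ):ℂ)))
      (Complex.I * r * Complex.exp (Complex.I * ((x*r:ℝ):ℂ))) x := by
  have h1 : HasDerivAt (fun w : ℂ => Complex.I * (w * (r:ℂ))) (Complex.I * r) (x:ℂ) := by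
    have := ((hasDerivAt_id ((x:ℂ))).mul_const (r:ℂ)).const_mul Complex.I
    exact this.congr_deriv (by simp)
  have h2 := h1.cexp.comp_ofReal (z := x)
  have hfun : (fun y : ℝ => Complex.exp (Complex.I * ((y:ℂ) * (r:ℂ)))) =
      fun y : ℝ => Complex.exp (Complex.I * ((y*r:ℝ):ℂ)) := by
    funext y
    norm_num
  rw [hfun] at h2
  convert h2 using 1
  push_cast
  ring

end Stmt2Aux

open Stmt2Aux in
/-- `2∫_a^1 e^{irs}(1-s²)^{-1/2} ds = 2 e^{ir} f_1^+(r) - 2 e^{iar} f_a^+(r)`. -/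
theorem stmt_2 (a r : ℝ) (ha0 : 0 ≤ a) (ha1 : a ≤ 1) (hr : 0 < r) :
    2 * (∫ s in a..(1 : ℝ),
        Complex.exp (Complex.I * ((r * s : ℝ) : ℂ)) * ((Real.sqrt (1 - s ^ 2) : ℝ) : ℂ)⁻¹) =
      2 * Complex.exp (Complex.I * (r : ℂ)) * fpm 1 1 r -
        2 * Complex.exp (Complex.I * ((a * r : ℝ) : ℂ)) * fpm 1 a r := by
  set Φ : ℝ → ℂ := fun x => (∫ s in x..(1:ℝ), gI r s) -
    Complex.I * (Complex.exp (Complex.I * ((x*r:ℝ):ℂ)) * Fc r x) with hΦ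
  have hcont : ContinuousOn Φ (Set.Icc a 1) := by
    refine ContinuousOn.sub ((L_contOn r).mono (Set.Icc_subset_Icc ha0 le_rfl)) ?_
    refine Continuous.continuousOn (continuous_const.mul (Continuous.mul ?_ ?_))
    · exact Complex.continuous_exp.comp (by fun_prop)
    · exact continuous_iff_continuousAt.mpr (Fc_contAt hr)
  have hderiv : ∀ x ∈ Set.Ico a 1, HasDerivWithinAt Φ 0 (Set.Ici x) x := by
    intro x hx
    have hx0 : 0 ≤ x := le_trans ha0 hx.1
    have hx1 : x < 1 := hx.2
    have hE := expi_hasDerivAt r x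
    have hF := Fc_hasDerivAt hr hx0 hx1
    have hprod := (hE.mul hF).const_mul Complex.I
    have hD := (L_hasDerivAt (r := r) hx0 hx1).sub hprod
    have hzero : -(gI r x) - Complex.I *
        (Complex.I * r * Complex.exp (Complex.I*((x*r:ℝ):ℂ)) * Fc r x +
          Complex.exp (Complex.I*((x*r:ℝ):ℂ)) *
            (Complex.I * (Gc r x 0 - (r:ℂ)*Fc r x))) = 0 := by
      rw [Gc_zero' hx0 hx1]
      unfold gI
      rw [show ((r*x:ℝ):ℂ) = ((x*r:ℝ):ℂ) by push_cast; ring]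
      linear_combination (-(Complex.exp (Complex.I*((x*r:ℝ):ℂ)) *
        ((Real.sqrt (1-x^2):ℝ):ℂ)⁻¹)) * Complex.I_mul_I
    have hΦD : HasDerivAt Φ 0 x := by
      rw [← hzero]
      exact hD
    exact hΦD.hasDerivWithinAt
  have key := constant_of_has_deriv_right_zero hcont hderiv 1 (Set.right_mem_Icc.mpr ha1)
  simp only [hΦ] at key
  rw [intervalIntegral.integral_same, show ((1*r:ℝ):ℂ) = (r:ℂ) by norm_num] at key
  have hgoal : (∫ s in a..(1:ℝ),
      Complex.exp (Complex.I * ((r * s : ℝ) : ℂ)) * ((Real.sqrt (1 - s ^ 2) : ℝ) : ℂ)⁻¹) =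
      ∫ s in a..(1:ℝ), gI r s := rfl
  rw [hgoal, fpm_eq, fpm_eq]
  linear_combination (-2) * key
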